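/- arXiv:1504.01010 — 6 statements merged into one kernel-verified Lean document; each statement's English description precedes it below -/
import Mathlib

section
/- Let Y be a real locally convex Hausdorff topological vector space and let A, B be non-empty subsets of Y. Then the following are equivalent: (a₁) A is contained in the closed convex hull of B; (a₂) for every continuous quasi-convex function ψ : Y → ℝ one has sup_{A} ψ ≤ sup_{B} ψ. -/
/-- Proposition 1: for non-empty subsets `A, B` of a real locally convex Hausdorff
topological vector space `Y`, `A` is contained in the closed convex hull of `B` iff
for every continuous quasi-convex `ψ : Y → ℝ` one has `sup_A ψ ≤ sup_B ψ`
(suprema taken in the extended reals). -/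
theorem convex_hull_like_prop1
    {Y : Type*} [AddCommGroup Y] [Module ℝ Y] [TopologicalSpace Y]
    [IsTopologicalAddGroup Y] [ContinuousSMul ℝ Y] [LocallyConvexSpace ℝ Y] [T2Space Y]
    (A B : Set Y) (hA : A.Nonempty) (hB : B.Nonempty) :
    A ⊆ closure (convexHull ℝ B) ↔
      ∀ ψ : Y → ℝ, Continuous ψ → (∀ r : ℝ, Convex ℝ {y | ψ y ≤ r}) →
        (⨆ a ∈ A, (ψ a : EReal)) ≤ ⨆ b ∈ B, (ψ b : EReal) := by
  constructor
  · intro hAB ψ hc hq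
    set S : EReal := ⨆ b ∈ B, (ψ b : EReal) with hS
    rcases eq_or_ne S ⊤ with hT | hT
    · simp [← hS, hT]
    · -- S is finite (B nonempty gives S ≥ some real, so S ≠ ⊥)
      obtain ⟨b0, hb0⟩ := hB
      have hbot : S ≠ ⊥ := by
        intro h
        have : ((ψ b0 : EReal)) ≤ S := hS ▸ le_biSup (fun y => ((ψ y : EReal))) hb0
        rw [h] at this
        exact (EReal.coe_ne_bot _) (le_bot_iff.mp this)
      set r : ℝ := S.toReal with hr
      have hSr : S = (r : EReal) := (EReal.coe_toReal hT hbot).symm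
      have hBsub : B ⊆ {y | ψ y ≤ r} := by
        intro b hb
        have : ((ψ b : EReal)) ≤ S := hS ▸ le_biSup (fun y => ((ψ y : EReal))) hb
        rw [hSr] at this
        exact_mod_cast this
      have hclosed : IsClosed {y | ψ y ≤ r} := isClosed_le hc continuous_const
      have hsub : closure (convexHull ℝ B) ⊆ {y | ψ y ≤ r} := by
        apply closure_minimal _ hclosed
        exact convexHull_min hBsub (hq r)
      apply iSup₂_le
      intro a ha
      have : ψ a ≤ r := hsub (hAB ha)
      rw [hSr]
      exact_mod_cast this
  · intro h a ha
    by_contra hnot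
    obtain ⟨f, u, hfu, hua⟩ := geometric_hahn_banach_closed_point
      (Convex.closure (convex_convexHull ℝ B)) isClosed_closure hnot
    have hψ := h f f.continuous (fun r => (convex_Iic (r : ℝ)).is_linear_preimage f.isLinear)
    have h1 : (u : EReal) < ⨆ a ∈ A, (f a : EReal) := by
      refine lt_of_lt_of_le ?_ (le_biSup _ ha)
      exact_mod_cast hua
    have h2 : (⨆ b ∈ B, (f b : EReal)) ≤ (u : EReal) := by
      apply iSup₂_le
      intro b hb
      have : f b < u := hfu b (subset_closure (subset_convexHull ℝ B hb))
      exact_mod_cast this.le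
    exact absurd (hψ.trans h2) (not_le.mpr h1)
end

section
/- Let E be a topological space, Ω a non-empty open subset of E whose closure is compact and whose boundary ∂Ω is non-empty, Y a real locally convex Hausdorff topological vector space, and f : closure(Ω) → Y a continuous function. Then the following are equivalent: (b₁) f(Ω) is contained in the closed convex hull of f(∂Ω); (b₂) for every continuous quasi-convex function ψ : Y → ℝ one has sup_{x ∈ Ω} ψ(f(x)) = sup_{x ∈ ∂Ω} ψ(f(x)). -/
open Set Filter Topology

/-- Proposition 2: let `Ω` be a non-empty open set with compact closure and non-empty
boundary in a topological space `E`, `Y` a real locally convex Hausdorff topological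
vector space, and `f` continuous on `closure Ω`. Then `f` satisfies the convex hull
property in `closure Ω` (i.e. `f '' Ω` is contained in the closed convex hull of
`f '' (frontier Ω)`) iff for every continuous quasi-convex `ψ : Y → ℝ`,
`sup_{x ∈ Ω} ψ (f x) = sup_{x ∈ ∂Ω} ψ (f x)` (suprema in the extended reals). -/
theorem convex_hull_like_prop2
    {E : Type*} [TopologicalSpace E]
    {Y : Type*} [AddCommGroup Y] [Module ℝ Y] [TopologicalSpace Y]
    [IsTopologicalAddGroup Y] [ContinuousSMul ℝ Y] [LocallyConvexSpace ℝ Y] [T2Space Y]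
    (Ω : Set E) (hΩne : Ω.Nonempty) (hΩo : IsOpen Ω) (hΩc : IsCompact (closure Ω))
    (hfr : (frontier Ω).Nonempty)
    (f : E → Y) (hf : ContinuousOn f (closure Ω)) :
    f '' Ω ⊆ closure (convexHull ℝ (f '' frontier Ω)) ↔
      ∀ ψ : Y → ℝ, Continuous ψ → (∀ r : ℝ, Convex ℝ {y | ψ y ≤ r}) →
        (⨆ x ∈ Ω, (ψ (f x) : EReal)) = ⨆ x ∈ frontier Ω, (ψ (f x) : EReal) := by
  have hfrsub : frontier Ω ⊆ closure Ω := frontier_subset_closure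
  constructor
  · intro hsub ψ hψc hψq
    have hfrc : IsCompact (frontier Ω) := hΩc.of_isClosed_subset isClosed_frontier hfrsub
    have hcont : ContinuousOn (fun x => ψ (f x)) (closure Ω) := hψc.comp_continuousOn hf
    obtain ⟨x₀, hx₀, hmax⟩ := hfrc.exists_isMaxOn hfr (hcont.mono hfrsub)
    set M := ψ (f x₀) with hM
    have hS : closure (convexHull ℝ (f '' frontier Ω)) ⊆ {y | ψ y ≤ M} := by
      apply closure_minimal
      · apply convexHull_min
        · rintro _ ⟨z, hz, rfl⟩
          exact hmax hz
        · exact hψq M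
      · exact IsClosed.preimage hψc isClosed_Iic
    have hΩle : ∀ x ∈ Ω, ψ (f x) ≤ M := fun x hx => hS (hsub ⟨x, hx, rfl⟩)
    apply le_antisymm
    · apply iSup₂_le
      intro x hx
      calc (ψ (f x) : EReal) ≤ (M : EReal) := by exact_mod_cast hΩle x hx
        _ ≤ ⨆ x ∈ frontier Ω, (ψ (f x) : EReal) :=
          le_iSup₂ (f := fun x (_ : x ∈ frontier Ω) => (ψ (f x) : EReal)) x₀ hx₀
    · apply iSup₂_le
      intro z hz
      have hzc : z ∈ closure Ω := hfrsub hz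
      have hne : (𝓝[Ω] z).NeBot := mem_closure_iff_nhdsWithin_neBot.mp hzc
      have htend : Tendsto (fun x => ((ψ (f x) : EReal))) (𝓝[Ω] z) (𝓝 ((ψ (f z) : EReal))) := by
        exact (continuous_coe_real_ereal.tendsto _).comp
          ((hcont z hzc).mono subset_closure)
      refine le_of_tendsto htend ?_
      filter_upwards [eventually_mem_nhdsWithin] with x hx
      exact le_iSup₂ (f := fun x (_ : x ∈ Ω) => (ψ (f x) : EReal)) x hx
  · intro hsup
    rintro _ ⟨x, hx, rfl⟩
    by_contra hy
    have hKc : Convex ℝ (closure (convexHull ℝ (f '' frontier Ω))) :=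
      (convex_convexHull ℝ _).closure
    obtain ⟨φ, u, hφK, hφy⟩ := geometric_hahn_banach_closed_point hKc isClosed_closure hy
    have hq : ∀ r : ℝ, Convex ℝ {y | φ y ≤ r} := fun r =>
      convex_halfSpace_le ⟨φ.map_add, fun c y => φ.map_smul c y⟩ r
    have h := hsup φ φ.continuous hq
    have h1 : (⨆ z ∈ frontier Ω, (φ (f z) : EReal)) ≤ (u : EReal) := by
      apply iSup₂_le
      intro z hz
      exact_mod_cast (hφK _ (subset_closure (subset_convexHull ℝ _ ⟨z, hz, rfl⟩))).le
    have h2 : (φ (f x) : EReal) ≤ ⨆ z ∈ Ω, (φ (f z) : EReal) :=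
      le_iSup₂ (f := fun z (_ : z ∈ Ω) => (φ (f z) : EReal)) x hx
    rw [h] at h2
    have : (φ (f x) : EReal) ≤ (u : EReal) := h2.trans h1
    exact absurd this (not_le.mpr (by exact_mod_cast hφy))
end

section
/- Let E be a topological space, Ω a non-empty open subset of E whose closure is compact and whose boundary ∂Ω is non-empty, Y a real locally convex Hausdorff topological vector space, g : closure(Ω) → Y a continuous function, and f the restriction of g to Ω. Then the following are equivalent: (c₁) f satisfies the convex hull-like property in Ω; (c₂) g satisfies the convex hull property in closure(Ω), i.e. g(Ω) is contained in the closed convex hull of g(∂Ω). -/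
/-- Proposition 3: let `Ω` be a non-empty open set with compact closure and non-empty
boundary in a topological space `E`, `Y` a real locally convex Hausdorff topological
vector space, and `g` continuous on `closure Ω` (so its restriction `f = g|_Ω` is
continuous on `Ω`). Then `f` satisfies the convex hull-like property in `Ω` (for every
continuous quasi-convex `ψ : Y → ℝ` there is `x* ∈ ∂Ω` with
`limsup_{x → x*, x ∈ Ω} ψ (f x) = sup_{x ∈ Ω} ψ (f x)`) iff `g` satisfies the convex
hull property in `closure Ω` (`g '' Ω` is contained in the closed convex hull of
`g '' (frontier Ω)`). -/
theorem convex_hull_like_prop3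
    {E : Type*} [TopologicalSpace E]
    {Y : Type*} [AddCommGroup Y] [Module ℝ Y] [TopologicalSpace Y]
    [IsTopologicalAddGroup Y] [ContinuousSMul ℝ Y] [LocallyConvexSpace ℝ Y] [T2Space Y]
    (Ω : Set E) (hΩne : Ω.Nonempty) (hΩo : IsOpen Ω) (hΩc : IsCompact (closure Ω))
    (hfr : (frontier Ω).Nonempty)
    (g : E → Y) (hg : ContinuousOn g (closure Ω)) :
    (∀ ψ : Y → ℝ, Continuous ψ → (∀ r : ℝ, Convex ℝ {y | ψ y ≤ r}) →
        ∃ xs ∈ frontier Ω,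
          Filter.limsup (fun x => (ψ (g x) : EReal)) (nhdsWithin xs Ω)
            = ⨆ x ∈ Ω, (ψ (g x) : EReal)) ↔
      g '' Ω ⊆ closure (convexHull ℝ (g '' frontier Ω)) := by
  have hsub : Ω ⊆ closure Ω := subset_closure
  constructor
  · -- (c₁) → (c₂)
    intro h
    rintro y ⟨x₀, hx₀, rfl⟩
    by_contra hnot
    obtain ⟨φ, u, hu1, hu2⟩ := geometric_hahn_banach_closed_point
      ((convex_convexHull ℝ _).closure) isClosed_closure hnot
    obtain ⟨xs, hxs, hls⟩ := h φ φ.continuous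
      (fun r => convex_halfSpace_le ⟨φ.map_add, φ.map_smul⟩ r)
    have hxsc : xs ∈ closure Ω := frontier_subset_closure hxs
    have hne : (nhdsWithin xs Ω).NeBot := mem_closure_iff_nhdsWithin_neBot.mp hxsc
    have htd : Filter.Tendsto (fun x => (φ (g x) : EReal)) (nhdsWithin xs Ω)
        (nhds ((φ (g xs) : EReal))) := by
      have hgt : Filter.Tendsto g (nhdsWithin xs Ω) (nhds (g xs)) :=
        (hg xs hxsc).mono hsub
      exact (continuous_coe_real_ereal.tendsto _).comp ((φ.continuous.tendsto _).comp hgt)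
    have hval : Filter.limsup (fun x => (φ (g x) : EReal)) (nhdsWithin xs Ω)
        = (φ (g xs) : EReal) := htd.limsup_eq
    have h1 : (φ (g x₀) : EReal) ≤ ⨆ x ∈ Ω, (φ (g x) : EReal) := le_biSup (fun x => (φ (g x) : EReal)) hx₀
    rw [hls] at hval
    have h2 : (φ (g x₀) : EReal) ≤ (φ (g xs) : EReal) := hval ▸ h1
    have h3 : φ (g x₀) ≤ φ (g xs) := EReal.coe_le_coe_iff.mp h2
    have h4 : φ (g xs) < u :=
      hu1 _ (subset_closure (subset_convexHull ℝ _ ⟨xs, hxs, rfl⟩))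
    linarith
  · -- (c₂) → (c₁)
    intro h ψ hψ hconv
    have hfc : IsCompact (frontier Ω) :=
      hΩc.of_isClosed_subset isClosed_frontier frontier_subset_closure
    obtain ⟨xs, hxs, hmax⟩ := hfc.exists_isMaxOn hfr
      (hψ.comp_continuousOn (hg.mono frontier_subset_closure))
    refine ⟨xs, hxs, ?_⟩
    have hxsc : xs ∈ closure Ω := frontier_subset_closure hxs
    have hne : (nhdsWithin xs Ω).NeBot := mem_closure_iff_nhdsWithin_neBot.mp hxsc
    have htd : Filter.Tendsto (fun x => (ψ (g x) : EReal)) (nhdsWithin xs Ω)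
        (nhds ((ψ (g xs) : EReal))) := by
      have hgt : Filter.Tendsto g (nhdsWithin xs Ω) (nhds (g xs)) :=
        (hg xs hxsc).mono hsub
      exact (continuous_coe_real_ereal.tendsto _).comp ((hψ.tendsto _).comp hgt)
    have hval : Filter.limsup (fun x => (ψ (g x) : EReal)) (nhdsWithin xs Ω)
        = (ψ (g xs) : EReal) := htd.limsup_eq
    rw [hval]
    have hS : closure (convexHull ℝ (g '' frontier Ω)) ⊆ {y | ψ y ≤ ψ (g xs)} := by
      refine closure_minimal (convexHull_min ?_ (hconv _)) (isClosed_le hψ continuous_const)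
      rintro y ⟨x, hx, rfl⟩
      exact hmax hx
    apply le_antisymm
    · rw [← hval]
      apply Filter.limsup_le_of_le (by isBoundedDefault)
      filter_upwards [self_mem_nhdsWithin] with x hx
      exact le_biSup (fun x => (ψ (g x) : EReal)) hx
    · refine iSup₂_le fun x hx => ?_
      exact EReal.coe_le_coe_iff.mpr (hS (h ⟨x, hx, rfl⟩))
end

section
/- Let E be a topological space, Ω a non-empty open subset of E whose closure is compact and whose boundary ∂Ω is non-empty, Y a real locally convex Hausdorff topological vector space, and f : Ω → Y a continuous function. Then at least one of the following holds: (i) f satisfies the convex hull-like property in Ω; (ii) there exists a non-empty open set X ⊆ Ω with closure(X) ⊆ Ω such that for every continuous function g : Ω → Y there exists λ̃ ≥ 0 such that for each λ > λ̃ the set (g + λf)(X) is supported at one of its points. -/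
open Filter Set Topology

/-- Theorem 1: let `Ω` be a non-empty open set with compact closure and non-empty
boundary in a topological space `E`, `Y` a real locally convex Hausdorff topological
vector space, and `f : Ω → Y` continuous. Then either (i) `f` satisfies the convex
hull-like property in `Ω`, or (ii) there is a non-empty open `X ⊆ Ω` with
`closure X ⊆ Ω` such that for every continuous `g : Ω → Y` there is `λ̃ ≥ 0` such
that for every `λ > λ̃` the set `(g + λ f) '' X` is supported at one of its points,
i.e. there are `x̂ ∈ X` and a nonzero continuous linear functional `φ` with
`φ (g x̂ + λ f x̂) ≤ φ (g x + λ f x)` for all `x ∈ X`. -/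
theorem convex_hull_like_alternative
    {E : Type*} [TopologicalSpace E]
    {Y : Type*} [AddCommGroup Y] [Module ℝ Y] [TopologicalSpace Y]
    [IsTopologicalAddGroup Y] [ContinuousSMul ℝ Y] [LocallyConvexSpace ℝ Y] [T2Space Y]
    (Ω : Set E) (hΩne : Ω.Nonempty) (hΩo : IsOpen Ω) (hΩc : IsCompact (closure Ω))
    (hfr : (frontier Ω).Nonempty)
    (f : E → Y) (hf : ContinuousOn f Ω) :
    (∀ ψ : Y → ℝ, Continuous ψ → (∀ r : ℝ, Convex ℝ {y | ψ y ≤ r}) →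
        ∃ xs ∈ frontier Ω,
          Filter.limsup (fun x => (ψ (f x) : EReal)) (nhdsWithin xs Ω)
            = ⨆ x ∈ Ω, (ψ (f x) : EReal)) ∨
    (∃ X : Set E, X.Nonempty ∧ IsOpen X ∧ X ⊆ Ω ∧ closure X ⊆ Ω ∧
      ∀ g : E → Y, ContinuousOn g Ω →
        ∃ lam₀ : ℝ, 0 ≤ lam₀ ∧ ∀ lam : ℝ, lam₀ < lam →
          ∃ x₀ ∈ X, ∃ φ : Y →L[ℝ] ℝ, φ ≠ 0 ∧
            ∀ x ∈ X, φ (g x₀ + lam • f x₀) ≤ φ (g x + lam • f x)) := by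
  rcases Classical.em (∀ ψ : Y → ℝ, Continuous ψ → (∀ r : ℝ, Convex ℝ {y | ψ y ≤ r}) →
      ∃ xs ∈ frontier Ω,
        Filter.limsup (fun x => (ψ (f x) : EReal)) (nhdsWithin xs Ω)
          = ⨆ x ∈ Ω, (ψ (f x) : EReal)) with hi | hi
  · exact Or.inl hi
  right
  push_neg at hi
  obtain ⟨ψ, hψc, hψq, hne⟩ := hi
  set M : EReal := ⨆ x ∈ Ω, (ψ (f x) : EReal) with hM
  have hψf : ContinuousOn (fun x => ψ (f x)) Ω := hψc.comp_continuousOn hf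
  -- for each frontier point, the limsup is strictly less than M
  have key : ∀ xs ∈ frontier Ω, ∃ r : ℝ, (r : EReal) < M ∧
      ∃ U : Set E, IsOpen U ∧ xs ∈ U ∧ ∀ x ∈ U ∩ Ω, ψ (f x) < r := by
    intro xs hxs
    have hle : Filter.limsup (fun x => (ψ (f x) : EReal)) (nhdsWithin xs Ω) ≤ M := by
      apply Filter.limsup_le_of_le
      · isBoundedDefault
      · filter_upwards [self_mem_nhdsWithin] with x hx
        exact le_biSup (fun x => (ψ (f x) : EReal)) hx
    have hlt : Filter.limsup (fun x => (ψ (f x) : EReal)) (nhdsWithin xs Ω) < M :=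
      lt_of_le_of_ne hle (hne xs hxs)
    obtain ⟨r, hr1, hr2⟩ := EReal.exists_between_coe_real hlt
    refine ⟨r, hr2, ?_⟩
    have hev : ∀ᶠ x in nhdsWithin xs Ω, ((ψ (f x) : EReal)) < (r : EReal) :=
      Filter.eventually_lt_of_limsup_lt hr1
    rw [eventually_nhdsWithin_iff] at hev
    obtain ⟨U, hUsub, hUo, hxU⟩ := eventually_nhds_iff.mp hev
    refine ⟨U, hUo, hxU, fun x hx => ?_⟩
    exact_mod_cast hUsub x hx.1 hx.2
  choose! r hrM U hUo hUx hUb using key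
  -- compactness of the frontier and a finite subcover
  have hfrc : IsCompact (frontier Ω) :=
    hΩc.of_isClosed_subset isClosed_frontier (frontier_subset_closure)
  have hcov : frontier Ω ⊆ ⋃ i : {xs // xs ∈ frontier Ω}, U i := fun x hx =>
    Set.mem_iUnion.mpr ⟨⟨x, hx⟩, hUx x hx⟩
  obtain ⟨t, ht⟩ := hfrc.elim_finite_subcover
    (fun i : {xs // xs ∈ frontier Ω} => U i) (fun i => hUo i i.2) hcov
  obtain ⟨xs₀, hxs₀⟩ := hfr
  have htne : t.Nonempty := by
    rcases Set.mem_iUnion₂.mp (ht hxs₀) with ⟨i, hit, _⟩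
    exact ⟨i, hit⟩
  -- the real threshold
  set r₀ : ℝ := max (t.sup' htne (fun i => r i)) (r xs₀) with hr₀
  have hr₀M : (r₀ : EReal) < M := by
    rcases max_cases (t.sup' htne (fun i => r i)) (r xs₀) with ⟨h1, _⟩ | ⟨h1, _⟩
    · obtain ⟨i, _, hieq⟩ := t.exists_mem_eq_sup' htne (fun i => r i)
      rw [hr₀, h1, hieq]
      exact hrM i i.2
    · rw [hr₀, h1]; exact hrM xs₀ hxs₀
  -- a point where ψ ∘ f exceeds r₀
  have hx₁ : ∃ x₁, x₁ ∈ Ω ∧ r₀ < ψ (f x₁) := by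
    have h' : (r₀ : EReal) < ⨆ x ∈ Ω, (ψ (f x) : EReal) := hr₀M
    rw [lt_iSup_iff] at h'
    obtain ⟨x₁, hx₁⟩ := h'
    rw [lt_iSup_iff] at hx₁
    obtain ⟨hx₁Ω, hx₁r⟩ := hx₁
    exact ⟨x₁, hx₁Ω, by exact_mod_cast hx₁r⟩
  obtain ⟨x₁, hx₁Ω, hx₁r⟩ := hx₁
  -- the level ρ
  set ρ : ℝ := (r₀ + ψ (f x₁)) / 2 with hρ
  have hrρ : r₀ < ρ := by rw [hρ]; linarith
  have hρx₁ : ρ < ψ (f x₁) := by rw [hρ]; linarith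
  -- the open set X
  set X : Set E := Ω ∩ (fun x => ψ (f x)) ⁻¹' Set.Ioi ρ with hX
  have hXo : IsOpen X := hψf.isOpen_inter_preimage hΩo isOpen_Ioi
  have hx₁X : x₁ ∈ X := ⟨hx₁Ω, hρx₁⟩
  have hXΩ : X ⊆ Ω := Set.inter_subset_left
  -- closure X ⊆ Ω
  have hclX : closure X ⊆ Ω := by
    intro z hz
    by_contra hzΩ
    have hzfr : z ∈ frontier Ω := by
      rw [hΩo.frontier_eq]
      exact ⟨(closure_mono hXΩ) hz, hzΩ⟩
    rcases Set.mem_iUnion₂.mp (ht hzfr) with ⟨i, hit, hiU⟩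
    obtain ⟨w, hwU, hwX⟩ : (U i ∩ X).Nonempty :=
      mem_closure_iff.mp hz (U i) (hUo i i.2) hiU
    have h1 : ψ (f w) < r i := hUb i i.2 w ⟨hwU, hwX.1⟩
    have h2' : r ↑i ≤ t.sup' htne (fun j => r ↑j) := by
      apply Finset.le_sup' (fun j : {xs // xs ∈ frontier Ω} => r ↑j) hit
    have h2 : r i ≤ r₀ := le_max_of_le_left h2'
    have h3 : ρ < ψ (f w) := hwX.2
    linarith
  -- the sublevel set T and the separation
  set T : Set Y := {y | ψ y ≤ ρ} with hT
  have hTc : IsClosed T := isClosed_le hψc continuous_const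
  have hTconv : Convex ℝ T := hψq ρ
  have hfx₁T : f x₁ ∉ T := by simp only [hT, Set.mem_setOf_eq]; linarith
  -- T is nonempty: take a point of Ω near xs₀
  have hTne : ∃ x₂, f x₂ ∈ T := by
    have hne' : (nhdsWithin xs₀ Ω).NeBot :=
      mem_closure_iff_nhdsWithin_neBot.mp (frontier_subset_closure hxs₀)
    have hUmem : U xs₀ ∩ Ω ∈ nhdsWithin xs₀ Ω :=
      inter_mem (mem_nhdsWithin_of_mem_nhds ((hUo xs₀ hxs₀).mem_nhds (hUx xs₀ hxs₀)))
        self_mem_nhdsWithin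
    obtain ⟨x₂, hx₂⟩ := Filter.nonempty_of_mem hUmem
    refine ⟨x₂, ?_⟩
    have := hUb xs₀ hxs₀ x₂ hx₂
    have : ψ (f x₂) < ρ := by
      have hrr : r xs₀ ≤ r₀ := le_max_right _ _
      linarith
    simp only [hT, Set.mem_setOf_eq]; linarith
  obtain ⟨x₂, hx₂T⟩ := hTne
  obtain ⟨φ, u, hφ1, hφ2⟩ := geometric_hahn_banach_point_closed hTconv hTc hfx₁T
  have hφne : φ ≠ 0 := by
    intro h
    have h1 : φ (f x₁) < u := hφ1
    have h2 : u < φ (f x₂) := hφ2 _ hx₂T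
    rw [h] at h1 h2
    simp at h1 h2
    linarith
  have hd : (0:ℝ) < u - φ (f x₁) := by linarith
  -- compactness of closure X
  have hclXc : IsCompact (closure X) :=
    hΩc.of_isClosed_subset isClosed_closure (closure_mono hXΩ)
  have hclXne : (closure X).Nonempty := ⟨x₁, subset_closure hx₁X⟩
  refine ⟨X, ⟨x₁, hx₁X⟩, hXo, hXΩ, hclX, ?_⟩
  intro g hg
  -- minimum of φ ∘ g on closure X
  have hφg : ContinuousOn (fun x => φ (g x)) (closure X) :=
    (φ.continuous.comp_continuousOn (hg.mono hclX))
  obtain ⟨xm, hxmcl, hxm⟩ := hclXc.exists_isMinOn hclXne hφg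
  set cg : ℝ := φ (g xm) with hcg
  have hcgle : ∀ x ∈ closure X, cg ≤ φ (g x) := fun x hx => hxm hx
  refine ⟨max 0 ((φ (g x₁) - cg) / (u - φ (f x₁))), le_max_left _ _, ?_⟩
  intro lam hlam
  have hlam0 : 0 < lam := lt_of_le_of_lt (le_max_left _ _) hlam
  have hlamd : φ (g x₁) - cg < lam * (u - φ (f x₁)) := by
    have := lt_of_le_of_lt (le_max_right _ _) hlam
    calc φ (g x₁) - cg ≤ ((φ (g x₁) - cg) / (u - φ (f x₁))) * (u - φ (f x₁)) := by
          rw [div_mul_cancel₀ _ (ne_of_gt hd)]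
      _ < lam * (u - φ (f x₁)) := by
          exact mul_lt_mul_of_pos_right this hd
  -- minimize φ ∘ (g + lam • f) on closure X
  set h : E → ℝ := fun x => φ (g x + lam • f x) with hh
  have hhc : ContinuousOn h (closure X) := by
    apply φ.continuous.comp_continuousOn
    exact ((hg.mono hclX).add (((hf.mono hclX)).const_smul lam))
  obtain ⟨x₀, hx₀cl, hx₀min⟩ := hclXc.exists_isMinOn hclXne hhc
  have hval : ∀ x, h x = φ (g x) + lam * φ (f x) := by
    intro x; rw [hh]; simp [map_add, map_smul, smul_eq_mul]
  have hx₀X : x₀ ∈ X := by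
    by_contra hx₀X
    have hx₀Ω : x₀ ∈ Ω := hclX hx₀cl
    have hψx₀ : ψ (f x₀) ≤ ρ := by
      by_contra hcon
      exact hx₀X ⟨hx₀Ω, by simpa using lt_of_not_ge hcon⟩
    have hfx₀T : f x₀ ∈ T := hψx₀
    have h1 : u < φ (f x₀) := hφ2 _ hfx₀T
    have h2 : h x₀ ≤ h x₁ := hx₀min (subset_closure hx₁X)
    have h3 : cg + lam * u ≤ h x₀ := by
      rw [hval]
      have := hcgle x₀ hx₀cl
      nlinarith
    have h4 : h x₁ < cg + lam * u := by
      rw [hval]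
      nlinarith
    linarith
  exact ⟨x₀, hx₀X, φ, hφne, fun x hx => hx₀min (subset_closure hx)⟩
end

section
/- Let Ω ⊆ ℝ² be a non-empty bounded open set, h : Ω → ℝ a continuous function, and α, β : Ω → ℝ two C¹ functions such that |α_x β_y − α_y β_x| + |h| > 0 and (α_x β_y − α_y β_x)·h ≥ 0 at every point of Ω. Then any C¹ solution (u, v) : Ω → ℝ² of the system u_x v_y − u_y v_x = h and β_y u_x − β_x u_y − α_y v_x + α_x v_y = 0 in Ω satisfies the convex hull-like property in Ω. -/
open Filter Topology Set Metric

lemma det_two_aux (L : ℝ × ℝ →L[ℝ] ℝ × ℝ) :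
    LinearMap.det (L : (ℝ × ℝ) →ₗ[ℝ] (ℝ × ℝ))
      = (L (1, 0)).1 * (L (0, 1)).2 - (L (0, 1)).1 * (L (1, 0)).2 := by
  rw [← LinearMap.det_toMatrix (Module.Basis.finTwoProd ℝ), Matrix.det_fin_two]
  simp [LinearMap.toMatrix_apply, Module.Basis.finTwoProd_zero, Module.Basis.finTwoProd_one,
    Module.Basis.coe_finTwoProd_repr]

lemma open_at_of_det {G : ℝ × ℝ → ℝ × ℝ} {p : ℝ × ℝ} {s : Set (ℝ × ℝ)}
    (hs : IsOpen s) (hp : p ∈ s) (hG : ContDiffOn ℝ 1 G s)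
    (hdet : (fderiv ℝ G p (1, 0)).1 * (fderiv ℝ G p (0, 1)).2
      - (fderiv ℝ G p (0, 1)).1 * (fderiv ℝ G p (1, 0)).2 ≠ 0) :
    Filter.map G (𝓝 p) = 𝓝 (G p) := by
  have hGat : ContDiffAt ℝ 1 G p := hG.contDiffAt (hs.mem_nhds hp)
  have hstrict : HasStrictFDerivAt G (fderiv ℝ G p) p := hGat.hasStrictFDerivAt one_ne_zero
  have hdet' : ContinuousLinearMap.det (fderiv ℝ G p) ≠ 0 := by
    rw [ContinuousLinearMap.det, det_two_aux]; exact hdet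
  have hstrict' : HasStrictFDerivAt G
      (((fderiv ℝ G p).toContinuousLinearEquivOfDetNeZero hdet' : (ℝ × ℝ) ≃L[ℝ] ℝ × ℝ)
        : (ℝ × ℝ) →L[ℝ] ℝ × ℝ) p := by
    rwa [ContinuousLinearMap.coe_toContinuousLinearEquivOfDetNeZero]
  exact hstrict'.map_nhds_eq_of_equiv

lemma bounded_ne_univ {U : Set (ℝ × ℝ)} (hUb : Bornology.IsBounded U) : U ≠ univ := by
  intro hUuniv
  obtain ⟨r, hr⟩ := hUb.subset_closedBall 0
  have hmem : ((|r| + 1, 0) : ℝ × ℝ) ∈ Metric.closedBall (0 : ℝ × ℝ) r :=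
    hr (hUuniv ▸ mem_univ _)
  rw [Metric.mem_closedBall] at hmem
  have hd : dist ((|r| + 1, 0) : ℝ × ℝ) (0 : ℝ × ℝ) = |r| + 1 := by
    rw [Prod.dist_eq]
    simp [Real.dist_eq, abs_of_nonneg (by positivity : (0:ℝ) ≤ |r| + 1)]
    positivity
  rw [hd] at hmem
  have h1 := le_abs_self r
  linarith

lemma maxOn_frontier {U : Set (ℝ × ℝ)} (hUo : IsOpen U) (hUne : U.Nonempty)
    (hUb : Bornology.IsBounded U)
    {G : ℝ × ℝ → ℝ × ℝ} (hGc : ContinuousOn G (closure U))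
    (hGo : ∀ x ∈ U, Filter.map G (𝓝 x) = 𝓝 (G x))
    {ψ : ℝ × ℝ → ℝ} (hψ : Continuous ψ) (hq : ∀ r : ℝ, Convex ℝ {y | ψ y ≤ r}) :
    ∃ x ∈ frontier U, ∀ y ∈ closure U, ψ (G y) ≤ ψ (G x) := by
  have hUc : IsCompact (closure U) := hUb.isCompact_closure
  have hUcne : (closure U).Nonempty := hUne.closure
  have hcont : ContinuousOn (fun x => ψ (G x)) (closure U) := hψ.comp_continuousOn hGc
  obtain ⟨xm, hxm, hmax⟩ := hUc.exists_isMaxOn hUcne hcont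
  set M := ψ (G xm) with hM
  have hfr_ne : (frontier U).Nonempty := by
    rw [nonempty_frontier_iff]
    exact ⟨hUne, bounded_ne_univ hUb⟩
  by_cases hy2 : ∃ y2, ψ y2 < M
  · obtain ⟨y2, hy2⟩ := hy2
    set S : Set (ℝ × ℝ) := closure U ∩ (fun x => ψ (G x)) ⁻¹' {M} with hS
    have hSclosed : IsClosed S :=
      hcont.preimage_isClosed_of_isClosed isClosed_closure isClosed_singleton
    have hScomp : IsCompact S := hUc.of_isClosed_subset hSclosed inter_subset_left
    by_cases hfr : (S ∩ frontier U).Nonempty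
    · obtain ⟨x0, hx0S, hx0f⟩ := hfr
      refine ⟨x0, hx0f, fun y hy => ?_⟩
      have : ψ (G x0) = M := hx0S.2
      rw [this]
      exact hmax hy
    · have hSU : S ⊆ U := by
        intro x hx
        by_contra hxU
        exact hfr ⟨x, hx, by rw [hUo.frontier_eq]; exact ⟨hx.1, hxU⟩⟩
      have hSne : S.Nonempty := ⟨xm, hxm, rfl⟩
      have hdc : ContinuousOn (fun x => dist (G x) y2) S :=
        (continuous_id.dist continuous_const).comp_continuousOn
          (hGc.mono (hS ▸ inter_subset_left))
      obtain ⟨x0, hx0S, hdistmax⟩ := hScomp.exists_isMaxOn hSne hdc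
      have hx0U : x0 ∈ U := hSU hx0S
      set y0 := G x0 with hy0
      have hψy0 : ψ y0 = M := hx0S.2
      have himg : G '' U ∈ 𝓝 y0 := by
        rw [← hGo x0 hx0U]
        exact Filter.image_mem_map (hUo.mem_nhds hx0U)
      have hz : Tendsto (fun s : ℝ => y0 + s • (y0 - y2)) (𝓝[>] 0) (𝓝 y0) := by
        have h0 : Tendsto (fun s : ℝ => y0 + s • (y0 - y2)) (𝓝 0)
            (𝓝 (y0 + (0 : ℝ) • (y0 - y2))) := by
          exact (tendsto_const_nhds.add ((continuous_id.smul continuous_const).tendsto 0))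
        simpa using h0.mono_left nhdsWithin_le_nhds
      have hev : ∀ᶠ s in 𝓝[>] (0:ℝ), (y0 + s • (y0 - y2)) ∈ G '' U :=
        hz.eventually_mem himg
      obtain ⟨s, hsImg, hs0⟩ := (hev.and eventually_mem_nhdsWithin).exists
      rw [mem_Ioi] at hs0
      set zs := y0 + s • (y0 - y2) with hzs
      obtain ⟨x1, hx1U, hGx1⟩ := hsImg
      have h1s : (0:ℝ) < 1 + s := by linarith
      have hle : ψ zs ≤ M := by rw [← hGx1]; exact hmax (subset_closure hx1U)
      have hge : M ≤ ψ zs := by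
        by_contra hlt
        push_neg at hlt
        set r := max (ψ y2) (ψ zs) with hr
        have h1 : y2 ∈ {y | ψ y ≤ r} := by exact le_max_left (ψ y2) (ψ zs)
        have h2 : zs ∈ {y | ψ y ≤ r} := by exact le_max_right (ψ y2) (ψ zs)
        have hcomb : (s / (1 + s)) • y2 + (1 / (1 + s)) • zs = y0 := by
          rw [hzs]
          match_scalars <;> field_simp <;> ring
        have h1s' : (1:ℝ) + s ≠ 0 := ne_of_gt h1s
        have hab : s / (1 + s) + 1 / (1 + s) = 1 := by field_simp; ring
        have hmem := hq r h1 h2 (div_nonneg hs0.le h1s.le) (div_nonneg zero_le_one h1s.le) hab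
        rw [hcomb] at hmem
        have hy0r : ψ y0 ≤ r := hmem
        have : r < M := max_lt hy2 hlt
        linarith [hψy0.ge.trans hy0r]
      have hx1S : x1 ∈ S := ⟨subset_closure hx1U, by
        simp only [mem_preimage, mem_singleton_iff]
        rw [hGx1]; exact le_antisymm hle hge⟩
      have hd : dist (G x1) y2 ≤ dist y0 y2 := hdistmax hx1S
      have hy0y2 : y0 ≠ y2 := by
        intro hcontr
        rw [← hcontr] at hy2
        rw [hψy0] at hy2
        exact lt_irrefl _ hy2
      have hdz : dist zs y2 = (1 + s) * dist y0 y2 := by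
        rw [dist_eq_norm, dist_eq_norm, hzs]
        have hzz : y0 + s • (y0 - y2) - y2 = (1 + s) • (y0 - y2) := by module
        rw [hzz, norm_smul]
        simp [abs_of_pos h1s]
      rw [hGx1, hdz] at hd
      have hdp : 0 < dist y0 y2 := dist_pos.mpr hy0y2
      nlinarith
  · push_neg at hy2
    obtain ⟨xs, hxs⟩ := hfr_ne
    exact ⟨xs, hxs, fun y hy => le_trans (hmax hy) (hy2 (G xs))⟩

lemma Gt_open
    (Ω : Set (ℝ × ℝ)) (hΩo : IsOpen Ω)
    (h : ℝ × ℝ → ℝ)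
    (α β : ℝ × ℝ → ℝ) (hα : ContDiffOn ℝ 1 α Ω) (hβ : ContDiffOn ℝ 1 β Ω)
    (hpos : ∀ p ∈ Ω,
      0 < |fderiv ℝ α p (1, 0) * fderiv ℝ β p (0, 1)
            - fderiv ℝ α p (0, 1) * fderiv ℝ β p (1, 0)| + |h p|)
    (hsign : ∀ p ∈ Ω,
      0 ≤ (fderiv ℝ α p (1, 0) * fderiv ℝ β p (0, 1)
            - fderiv ℝ α p (0, 1) * fderiv ℝ β p (1, 0)) * h p)
    (u v : ℝ × ℝ → ℝ) (hu : ContDiffOn ℝ 1 u Ω) (hv : ContDiffOn ℝ 1 v Ω)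
    (heq1 : ∀ p ∈ Ω,
      fderiv ℝ u p (1, 0) * fderiv ℝ v p (0, 1)
        - fderiv ℝ u p (0, 1) * fderiv ℝ v p (1, 0) = h p)
    (heq2 : ∀ p ∈ Ω,
      fderiv ℝ β p (0, 1) * fderiv ℝ u p (1, 0)
        - fderiv ℝ β p (1, 0) * fderiv ℝ u p (0, 1)
        - fderiv ℝ α p (0, 1) * fderiv ℝ v p (1, 0)
        + fderiv ℝ α p (1, 0) * fderiv ℝ v p (0, 1) = 0)
    (t : ℝ) (ht : t ≠ 0) (p : ℝ × ℝ) (hp : p ∈ Ω) :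
    Filter.map (fun q => (u q + t * α q, v q + t * β q)) (𝓝 p)
      = 𝓝 (u p + t * α p, v p + t * β p) := by
  set G : ℝ × ℝ → ℝ × ℝ := fun q => (u q + t * α q, v q + t * β q) with hG
  have hGcd : ContDiffOn ℝ 1 G Ω :=
    ((hu.add (contDiffOn_const.mul hα)).prodMk (hv.add (contDiffOn_const.mul hβ)))
  have hnp : Ω ∈ 𝓝 p := hΩo.mem_nhds hp
  have hud : DifferentiableAt ℝ u p := ((hu.contDiffAt hnp).differentiableAt one_ne_zero)
  have hvd : DifferentiableAt ℝ v p := ((hv.contDiffAt hnp).differentiableAt one_ne_zero)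
  have had : DifferentiableAt ℝ α p := ((hα.contDiffAt hnp).differentiableAt one_ne_zero)
  have hbd : DifferentiableAt ℝ β p := ((hβ.contDiffAt hnp).differentiableAt one_ne_zero)
  have hG1 : HasFDerivAt (fun q => u q + t * α q)
      (fderiv ℝ u p + t • fderiv ℝ α p) p :=
    hud.hasFDerivAt.add (had.hasFDerivAt.const_mul t)
  have hG2 : HasFDerivAt (fun q => v q + t * β q)
      (fderiv ℝ v p + t • fderiv ℝ β p) p :=
    hvd.hasFDerivAt.add (hbd.hasFDerivAt.const_mul t)
  have hGd : HasFDerivAt G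
      ((fderiv ℝ u p + t • fderiv ℝ α p).prod (fderiv ℝ v p + t • fderiv ℝ β p)) p :=
    hG1.prodMk hG2
  refine open_at_of_det hΩo hp hGcd ?_
  rw [hGd.fderiv]
  simp only [ContinuousLinearMap.prod_apply, ContinuousLinearMap.add_apply,
    ContinuousLinearMap.coe_smul', Pi.smul_apply, smul_eq_mul]
  set ux := fderiv ℝ u p (1, 0); set uy := fderiv ℝ u p (0, 1)
  set vx := fderiv ℝ v p (1, 0); set vy := fderiv ℝ v p (0, 1)
  set ax := fderiv ℝ α p (1, 0); set ay := fderiv ℝ α p (0, 1)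
  set bx := fderiv ℝ β p (1, 0); set by' := fderiv ℝ β p (0, 1)
  have e1 := heq1 p hp
  have e2 := heq2 p hp
  have hps := hpos p hp
  have hsg := hsign p hp
  have key : (ux + t * ax) * (vy + t * by') - (uy + t * ay) * (vx + t * bx)
      = h p + t ^ 2 * (ax * by' - ay * bx) := by
    linear_combination e1 + t * e2
  rw [key]
  rcases eq_or_ne (h p) 0 with h0 | h0
  · rw [h0] at hps ⊢
    simp only [abs_zero, add_zero] at hps
    have hJ : ax * by' - ay * bx ≠ 0 := by
      intro hc; rw [hc] at hps; simp at hps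
    simpa using mul_ne_zero (pow_ne_zero 2 ht) hJ
  · intro hc
    have h2 : 0 < h p * h p := mul_self_pos.mpr h0
    have hsg' : 0 ≤ (ax * by' - ay * bx) * h p := hsg
    have hc2 : t ^ 2 * (ax * by' - ay * bx) = - h p := by linarith
    have h4 : 0 ≤ (- h p) * h p := by
      have h5 := mul_nonneg (sq_nonneg t) hsg'
      calc (0:ℝ) ≤ t ^ 2 * ((ax * by' - ay * bx) * h p) := h5
        _ = (t ^ 2 * (ax * by' - ay * bx)) * h p := by ring
        _ = (- h p) * h p := by rw [hc2]
    nlinarith [h4, h2]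

lemma frontier_max_limit
    (Ω : Set (ℝ × ℝ)) (hΩo : IsOpen Ω)
    (u v α β : ℝ × ℝ → ℝ)
    (hu : ContDiffOn ℝ 1 u Ω) (hv : ContDiffOn ℝ 1 v Ω)
    (hα : ContDiffOn ℝ 1 α Ω) (hβ : ContDiffOn ℝ 1 β Ω)
    (hopen : ∀ t : ℝ, t ≠ 0 → ∀ p ∈ Ω,
      Filter.map (fun q => (u q + t * α q, v q + t * β q)) (𝓝 p)
        = 𝓝 (u p + t * α p, v p + t * β p))
    {ψ : ℝ × ℝ → ℝ} (hψ : Continuous ψ) (hq : ∀ r : ℝ, Convex ℝ {y | ψ y ≤ r})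
    (U : Set (ℝ × ℝ)) (hUo : IsOpen U) (hUne : U.Nonempty)
    (hUb : Bornology.IsBounded U) (hUΩ : closure U ⊆ Ω) :
    ∃ x ∈ frontier U, ∀ y ∈ closure U, ψ (u y, v y) ≤ ψ (u x, v x) := by
  set T : ℕ → ℝ := fun n => 1 / (n + 1) with hT
  have hTne : ∀ n, T n ≠ 0 := fun n => by positivity
  have hucont : ContinuousOn u Ω := hu.continuousOn
  have hvcont : ContinuousOn v Ω := hv.continuousOn
  have hacont : ContinuousOn α Ω := hα.continuousOn
  have hbcont : ContinuousOn β Ω := hβ.continuousOn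
  have hGn : ∀ n : ℕ, ∃ x ∈ frontier U, ∀ y ∈ closure U,
      ψ (u y + T n * α y, v y + T n * β y) ≤ ψ (u x + T n * α x, v x + T n * β x) := by
    intro n
    have hGc : ContinuousOn (fun q => (u q + T n * α q, v q + T n * β q)) (closure U) :=
      (((hucont.add (continuousOn_const.mul hacont)).prodMk
        (hvcont.add (continuousOn_const.mul hbcont)))).mono hUΩ
    exact maxOn_frontier hUo hUne hUb hGc
      (fun x hx => hopen (T n) (hTne n) x (hUΩ (subset_closure hx))) hψ hq
  choose x hxf hxmax using hGn
  have hfrc : IsCompact (frontier U) :=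
    hUb.isCompact_closure.of_isClosed_subset isClosed_frontier frontier_subset_closure
  obtain ⟨xb, hxb, φ, hφ, hconv⟩ := hfrc.tendsto_subseq hxf
  refine ⟨xb, hxb, fun y hy => ?_⟩
  have hxbΩ : xb ∈ Ω := hUΩ (frontier_subset_closure hxb)
  have hyΩ : y ∈ Ω := hUΩ hy
  -- T (φ n) → 0
  have hT0 : Tendsto (fun n => T (φ n)) atTop (𝓝 0) := by
    have h1 : Tendsto (fun n : ℕ => ((n : ℝ) + 1)) atTop atTop :=
      tendsto_atTop_add_const_right _ 1 tendsto_natCast_atTop_atTop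
    have h2 : Tendsto T atTop (𝓝 0) := tendsto_const_nhds.div_atTop h1
    exact h2.comp hφ.tendsto_atTop
  -- continuity of coordinate functions at xb along the subsequence
  have cAt : ∀ (f : ℝ × ℝ → ℝ), ContinuousOn f Ω → ∀ z ∈ Ω,
      ContinuousAt f z := fun f hf z hz => hf.continuousAt (hΩo.mem_nhds hz)
  have hu' : Tendsto (fun n => u (x (φ n))) atTop (𝓝 (u xb)) :=
    ((cAt u hucont xb hxbΩ).tendsto).comp hconv
  have hv' : Tendsto (fun n => v (x (φ n))) atTop (𝓝 (v xb)) :=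
    ((cAt v hvcont xb hxbΩ).tendsto).comp hconv
  have ha' : Tendsto (fun n => α (x (φ n))) atTop (𝓝 (α xb)) :=
    ((cAt α hacont xb hxbΩ).tendsto).comp hconv
  have hb' : Tendsto (fun n => β (x (φ n))) atTop (𝓝 (β xb)) :=
    ((cAt β hbcont xb hxbΩ).tendsto).comp hconv
  have hRHS : Tendsto (fun n => ψ (u (x (φ n)) + T (φ n) * α (x (φ n)),
      v (x (φ n)) + T (φ n) * β (x (φ n)))) atTop (𝓝 (ψ (u xb, v xb))) := by
    have h1 : Tendsto (fun n => (u (x (φ n)) + T (φ n) * α (x (φ n)),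
        v (x (φ n)) + T (φ n) * β (x (φ n)))) atTop (𝓝 (u xb + 0 * α xb, v xb + 0 * β xb)) :=
      ((hu'.add ((hT0.mul ha'))).prodMk_nhds (hv'.add ((hT0.mul hb'))))
    simp only [zero_mul, add_zero] at h1
    exact (hψ.tendsto _).comp h1
  have hLHS : Tendsto (fun n => ψ (u y + T (φ n) * α y, v y + T (φ n) * β y))
      atTop (𝓝 (ψ (u y, v y))) := by
    have h1 : Tendsto (fun n => (u y + T (φ n) * α y, v y + T (φ n) * β y))
        atTop (𝓝 (u y + 0 * α y, v y + 0 * β y)) :=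
      ((tendsto_const_nhds.add (hT0.mul tendsto_const_nhds)).prodMk_nhds
        (tendsto_const_nhds.add (hT0.mul tendsto_const_nhds)))
    simp only [zero_mul, add_zero] at h1
    exact (hψ.tendsto _).comp h1
  exact le_of_tendsto_of_tendsto' hLHS hRHS fun n => hxmax (φ n) y hy

/-- Theorem 4: let `Ω ⊆ ℝ²` be non-empty, bounded and open, `h : Ω → ℝ` continuous,
and `α, β : Ω → ℝ` two `C¹` functions with `|α_x β_y - α_y β_x| + |h| > 0` and
`(α_x β_y - α_y β_x) · h ≥ 0` in `Ω`. Then every `C¹` solution `(u, v)` in `Ω` of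
the system `u_x v_y - u_y v_x = h`, `β_y u_x - β_x u_y - α_y v_x + α_x v_y = 0`
satisfies the convex hull-like property in `Ω`. -/
theorem system_convex_hull_like
    (Ω : Set (ℝ × ℝ)) (hΩne : Ω.Nonempty) (hΩo : IsOpen Ω)
    (hΩb : Bornology.IsBounded Ω)
    (h : ℝ × ℝ → ℝ) (hh : ContinuousOn h Ω)
    (α β : ℝ × ℝ → ℝ) (hα : ContDiffOn ℝ 1 α Ω) (hβ : ContDiffOn ℝ 1 β Ω)
    (hpos : ∀ p ∈ Ω,
      0 < |fderiv ℝ α p (1, 0) * fderiv ℝ β p (0, 1)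
            - fderiv ℝ α p (0, 1) * fderiv ℝ β p (1, 0)| + |h p|)
    (hsign : ∀ p ∈ Ω,
      0 ≤ (fderiv ℝ α p (1, 0) * fderiv ℝ β p (0, 1)
            - fderiv ℝ α p (0, 1) * fderiv ℝ β p (1, 0)) * h p)
    (u v : ℝ × ℝ → ℝ) (hu : ContDiffOn ℝ 1 u Ω) (hv : ContDiffOn ℝ 1 v Ω)
    (heq1 : ∀ p ∈ Ω,
      fderiv ℝ u p (1, 0) * fderiv ℝ v p (0, 1)
        - fderiv ℝ u p (0, 1) * fderiv ℝ v p (1, 0) = h p)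
    (heq2 : ∀ p ∈ Ω,
      fderiv ℝ β p (0, 1) * fderiv ℝ u p (1, 0)
        - fderiv ℝ β p (1, 0) * fderiv ℝ u p (0, 1)
        - fderiv ℝ α p (0, 1) * fderiv ℝ v p (1, 0)
        + fderiv ℝ α p (1, 0) * fderiv ℝ v p (0, 1) = 0) :
    ∀ ψ : ℝ × ℝ → ℝ, Continuous ψ → (∀ r : ℝ, Convex ℝ {y | ψ y ≤ r}) →
      ∃ xs ∈ frontier Ω,
        Filter.limsup (fun p => (ψ (u p, v p) : EReal)) (nhdsWithin xs Ω)
          = ⨆ p ∈ Ω, (ψ (u p, v p) : EReal) := by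
  intro ψ hψ hq
  have hopen : ∀ t : ℝ, t ≠ 0 → ∀ p ∈ Ω,
      Filter.map (fun q => (u q + t * α q, v q + t * β q)) (𝓝 p)
        = 𝓝 (u p + t * α p, v p + t * β p) :=
    fun t ht p hp => Gt_open Ω hΩo h α β hα hβ hpos hsign u v hu hv heq1 heq2 t ht p hp
  -- distance to the complement
  have hΩcne : Ωᶜ.Nonempty := by
    rcases eq_empty_or_nonempty Ωᶜ with he | hne
    · exact absurd (compl_empty_iff.mp he) (bounded_ne_univ hΩb)
    · exact hne
  set d : ℝ × ℝ → ℝ := fun x => Metric.infDist x Ωᶜ with hd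
  have hdc : Continuous d := continuous_infDist_pt _
  have hdpos : ∀ x ∈ Ω, 0 < d x := fun x hx =>
    ((hΩo.isClosed_compl.notMem_iff_infDist_pos hΩcne).mp (by simpa using hx))
  have hdzero : ∀ x, x ∉ Ω → d x = 0 := fun x hx =>
    Metric.infDist_zero_of_mem (by simpa using hx)
  obtain ⟨q0, hq0⟩ := hΩne
  set d0 := d q0 with hd0
  have hd0pos : 0 < d0 := hdpos q0 hq0
  -- the exhausting open sets
  set U : ℕ → Set (ℝ × ℝ) := fun n => {x | d0 / (n + 2) < d x} with hU
  have hUo : ∀ n, IsOpen (U n) := fun n => isOpen_lt continuous_const hdc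
  have hUsubΩ : ∀ n : ℕ, ∀ x, d0 / ((n:ℝ) + 2) ≤ d x → x ∈ Ω := by
    intro n x hx
    by_contra hxΩ
    rw [hdzero x hxΩ] at hx
    have : (0:ℝ) < d0 / (n + 2) := div_pos hd0pos (by positivity)
    linarith
  have hUne : ∀ n, (U n).Nonempty := by
    intro n
    refine ⟨q0, ?_⟩
    have : d0 / (n + 2) < d0 := by
      apply div_lt_self hd0pos
      have : (0:ℝ) ≤ (n:ℝ) := Nat.cast_nonneg n
      linarith
    exact this
  have hUcl : ∀ n, closure (U n) ⊆ Ω := by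
    intro n x hx
    have h1 : closure (U n) ⊆ {x | d0 / (n + 2) ≤ d x} :=
      closure_lt_subset_le continuous_const hdc
    exact hUsubΩ n x (h1 hx)
  have hUb : ∀ n, Bornology.IsBounded (U n) := fun n =>
    hΩb.subset (fun x hx => hUsubΩ n x (le_of_lt hx))
  -- frontier maximizers
  have hmaxn : ∀ n : ℕ, ∃ x ∈ frontier (U n), ∀ y ∈ closure (U n),
      ψ (u y, v y) ≤ ψ (u x, v x) := fun n =>
    frontier_max_limit Ω hΩo u v α β hu hv hα hβ hopen hψ hq
      (U n) (hUo n) (hUne n) (hUb n) (hUcl n)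
  choose x hxf hxmax using hmaxn
  have hxΩ : ∀ n, x n ∈ Ω := fun n => hUcl n (frontier_subset_closure (hxf n))
  have hxd : ∀ n, d (x n) ≤ d0 / (n + 2) := by
    intro n
    have hnotU : x n ∉ U n := by
      have := (hUo n).frontier_eq ▸ hxf n
      exact this.2
    simpa [hU] using not_lt.mp hnotU
  -- converging subsequence to a frontier point
  have hclΩc : IsCompact (closure Ω) := hΩb.isCompact_closure
  obtain ⟨xs, hxscl, φ, hφ, hconv⟩ := hclΩc.tendsto_subseq
    (fun n => subset_closure (hxΩ n))
  have hdbound : Tendsto (fun n : ℕ => d0 / ((φ n : ℝ) + 2)) atTop (𝓝 0) := by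
    apply Tendsto.div_atTop tendsto_const_nhds
    exact tendsto_atTop_add_const_right _ 2
      (tendsto_natCast_atTop_atTop.comp hφ.tendsto_atTop)
  have hdxs : d xs = 0 := by
    have h1 : Tendsto (fun n => d (x (φ n))) atTop (𝓝 (d xs)) :=
      (hdc.tendsto xs).comp hconv
    have h2 : d xs ≤ 0 :=
      le_of_tendsto_of_tendsto' h1 hdbound (fun n => hxd (φ n))
    exact le_antisymm h2 Metric.infDist_nonneg
  have hxsΩ : xs ∉ Ω := fun hxs => absurd hdxs (ne_of_gt (hdpos xs hxs))
  have hxsf : xs ∈ frontier Ω := by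
    have : xs ∈ closure Ω \ interior Ω := ⟨hxscl, by rwa [hΩo.interior_eq]⟩
    rwa [frontier]
  refine ⟨xs, hxsf, ?_⟩
  set f : ℝ × ℝ → EReal := fun p => (ψ (u p, v p) : EReal) with hf
  apply le_antisymm
  · refine Filter.limsup_le_of_le (by isBoundedDefault) ?_
    exact eventually_mem_nhdsWithin.mono fun p hp =>
      le_iSup₂ (f := fun p (_ : p ∈ Ω) => f p) p hp
  · apply iSup₂_le
    intro q hq'
    -- eventually q ∈ U (φ n)
    have hqd : 0 < d q := hdpos q hq'
    have hev : ∀ᶠ n in atTop, d0 / ((φ n : ℝ) + 2) < d q :=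
      hdbound.eventually_lt_const hqd
    have hev2 : ∀ᶠ n in atTop, f q ≤ f (x (φ n)) := by
      refine hev.mono fun n hn => ?_
      have hqU : q ∈ U (φ n) := hn
      have := hxmax (φ n) q (subset_closure hqU)
      exact EReal.coe_le_coe_iff.mpr this
    have hseq : Tendsto (fun n => x (φ n)) atTop (𝓝[Ω] xs) :=
      tendsto_nhdsWithin_of_tendsto_nhds_of_eventually_within _ hconv
        (Eventually.of_forall fun n => hxΩ (φ n))
    calc f q ≤ Filter.limsup (fun n => f (x (φ n))) atTop :=
          Filter.le_limsup_of_frequently_le hev2.frequently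
      _ = Filter.limsup f (Filter.map (fun n => x (φ n)) atTop) :=
          Filter.limsup_comp f _ _
      _ ≤ Filter.limsup f (𝓝[Ω] xs) := Filter.limsup_le_limsup_of_le hseq
end

section
/- Let Ω ⊆ ℝ² be a non-empty bounded open set and β : Ω → ℝ a C¹ function. Assume there exists a C¹ function α : Ω → ℝ such that α_x β_y − α_y β_x vanishes at no point of Ω. Then for every function u ∈ C¹(Ω) ∩ C⁰(closure(Ω)) satisfying β_y u_x − β_x u_y = 0 in Ω, one has sup_{Ω} u = sup_{∂Ω} u and inf_{Ω} u = inf_{∂Ω} u. -/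
open Set Filter Topology

/-- Algebra: if `(w1,w2)` is in the kernel of `∇β` and the PDE holds, with `∇β ≠ 0`
(guaranteed by the nonvanishing determinant), then `(w1,w2)` is in the kernel of `∇u`. -/
private lemma alg_ker {ax ay bx bY ux uy w1 w2 : ℝ}
    (h1 : w1 * bx + w2 * bY = 0) (h2 : bY * ux - bx * uy = 0)
    (hdet : ax * bY - ay * bx ≠ 0) : w1 * ux + w2 * uy = 0 := by
  by_cases hbY : bY = 0
  · have hbx : bx ≠ 0 := by
      intro h; apply hdet; rw [hbY, h]; ring
    have huy : uy = 0 := by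
      have : bx * uy = 0 := by linarith [h2, hbY ▸ h2]
      rcases mul_eq_zero.mp this with h | h
      · exact absurd h hbx
      · exact h
    have hw1 : w1 = 0 := by
      have : w1 * bx = 0 := by rw [hbY] at h1; linarith
      rcases mul_eq_zero.mp this with h | h
      · exact h
      · exact absurd h hbx
    rw [hw1, huy]; ring
  · have h3 : bY * (w1 * ux + w2 * uy) = 0 := by linear_combination w1 * h2 + uy * h1
    rcases mul_eq_zero.mp h3 with h | h
    · exact absurd h hbY
    · exact h

/-- Decompose a continuous linear functional on `ℝ × ℝ`. -/
private lemma clm_decomp (L : (ℝ × ℝ) →L[ℝ] ℝ) (v : ℝ × ℝ) :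
    L v = v.1 * L (1, 0) + v.2 * L (0, 1) := by
  have hv : v = v.1 • ((1 : ℝ), (0 : ℝ)) + v.2 • ((0 : ℝ), (1 : ℝ)) := by
    simp [Prod.ext_iff]
  rw [hv, map_add, map_smul, map_smul]
  simp [smul_eq_mul]

/-- Key lemma: the maximum over the closure is attained on the frontier. -/
private lemma exists_frontier_isMaxOn
    (Ω : Set (ℝ × ℝ)) (hΩne : Ω.Nonempty) (hΩo : IsOpen Ω)
    (hΩb : Bornology.IsBounded Ω)
    (β : ℝ × ℝ → ℝ) (hβ : ContDiffOn ℝ 1 β Ω)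
    (hα : ∃ α : ℝ × ℝ → ℝ, ContDiffOn ℝ 1 α Ω ∧
      ∀ p ∈ Ω, fderiv ℝ α p (1, 0) * fderiv ℝ β p (0, 1)
          - fderiv ℝ α p (0, 1) * fderiv ℝ β p (1, 0) ≠ 0)
    (u : ℝ × ℝ → ℝ) (hu : ContDiffOn ℝ 1 u Ω) (huc : ContinuousOn u (closure Ω))
    (heq : ∀ p ∈ Ω,
      fderiv ℝ β p (0, 1) * fderiv ℝ u p (1, 0)
        - fderiv ℝ β p (1, 0) * fderiv ℝ u p (0, 1) = 0) :
    ∃ x ∈ frontier Ω, ∀ y ∈ closure Ω, u y ≤ u x := by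
  obtain ⟨α, hαd, hαne⟩ := hα
  have hcc : IsCompact (closure Ω) :=
    Metric.isCompact_of_isClosed_isBounded isClosed_closure hΩb.closure
  obtain ⟨x₀, hx₀c, hx₀max⟩ := hcc.exists_isMaxOn hΩne.closure huc
  set M := u x₀ with hM
  set K := {x ∈ closure Ω | u x = M} with hK
  have hKcl : IsClosed K := by
    have h := huc.preimage_isClosed_of_isClosed isClosed_closure
      (isClosed_singleton : IsClosed {M})
    have hKeq : K = closure Ω ∩ u ⁻¹' {M} := by ext x; simp [hK]
    rw [hKeq]; exact h
  have hKc : IsCompact K := hcc.of_isClosed_subset hKcl (fun x hx => hx.1)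
  have hKne : K.Nonempty := ⟨x₀, hx₀c, rfl⟩
  -- It suffices to find a point of K on the frontier.
  suffices hKf : (K ∩ frontier Ω).Nonempty by
    obtain ⟨x, hxK, hxf⟩ := hKf
    exact ⟨x, hxf, fun y hy => hxK.2 ▸ hx₀max hy⟩
  by_contra hF
  rw [Set.not_nonempty_iff_eq_empty] at hF
  have hKΩ : K ⊆ Ω := by
    intro x hx
    have hxc : x ∈ closure Ω := hx.1
    rw [← hΩo.interior_eq]
    rcases (closure_eq_interior_union_frontier Ω ▸ hxc) with h | h
    · exact h
    · exact absurd (Set.mem_inter hx h) (by rw [hF]; exact id)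
  -- pick p ∈ K maximizing α on K
  have hαK : ContinuousOn α K := (hαd.continuousOn).mono hKΩ
  obtain ⟨p, hpK, hpmax⟩ := hKc.exists_isMaxOn hKne hαK
  have hpΩ : p ∈ Ω := hKΩ hpK
  -- differentiability facts
  have hdiffα : ∀ q ∈ Ω, DifferentiableAt ℝ α q := fun q hq =>
    ((hαd.contDiffAt (hΩo.mem_nhds hq)).differentiableAt one_ne_zero)
  have hdiffβ : ∀ q ∈ Ω, DifferentiableAt ℝ β q := fun q hq =>
    ((hβ.contDiffAt (hΩo.mem_nhds hq)).differentiableAt one_ne_zero)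
  have hdiffu : ∀ q ∈ Ω, DifferentiableAt ℝ u q := fun q hq =>
    ((hu.contDiffAt (hΩo.mem_nhds hq)).differentiableAt one_ne_zero)
  -- the map Φ = (α, β)
  set Φ : ℝ × ℝ → ℝ × ℝ := fun z => (α z, β z) with hΦ
  have hΦd : ContDiffAt ℝ 1 Φ p :=
    (hαd.contDiffAt (hΩo.mem_nhds hpΩ)).prodMk (hβ.contDiffAt (hΩo.mem_nhds hpΩ))
  set L : (ℝ × ℝ) →L[ℝ] (ℝ × ℝ) := (fderiv ℝ α p).prod (fderiv ℝ β p) with hLdef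
  have hL : HasFDerivAt Φ L p :=
    HasFDerivAt.prodMk ((hdiffα p hpΩ).hasFDerivAt) ((hdiffβ p hpΩ).hasFDerivAt)
  -- L is bijective
  have hkey : ∀ v : ℝ × ℝ, L v = 0 → v = 0 := by
    intro v hv
    have hA : fderiv ℝ α p v = 0 := congrArg Prod.fst hv
    have hB : fderiv ℝ β p v = 0 := congrArg Prod.snd hv
    rw [clm_decomp] at hA hB
    have hdet := hαne p hpΩ
    set a10 := fderiv ℝ α p (1, 0); set a01 := fderiv ℝ α p (0, 1)
    set b10 := fderiv ℝ β p (1, 0); set b01 := fderiv ℝ β p (0, 1)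
    have h1 : (a10 * b01 - a01 * b10) * v.1 = 0 := by linear_combination b01 * hA - a01 * hB
    have h2 : (a10 * b01 - a01 * b10) * v.2 = 0 := by linear_combination a10 * hB - b10 * hA
    have hv1 : v.1 = 0 := by rcases mul_eq_zero.mp h1 with h | h; exact absurd h hdet; exact h
    have hv2 : v.2 = 0 := by rcases mul_eq_zero.mp h2 with h | h; exact absurd h hdet; exact h
    exact Prod.ext hv1 hv2
  have hinj : Function.Injective L.toLinearMap := by
    rw [← LinearMap.ker_eq_bot, LinearMap.ker_eq_bot']
    intro v hv
    exact hkey v hv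
  have hsurj : Function.Surjective L.toLinearMap := LinearMap.injective_iff_surjective.mp hinj
  set E : (ℝ × ℝ) ≃L[ℝ] (ℝ × ℝ) :=
    (LinearEquiv.ofBijective L.toLinearMap ⟨hinj, hsurj⟩).toContinuousLinearEquiv with hE
  have hEL : (E : (ℝ × ℝ) →L[ℝ] (ℝ × ℝ)) = L := by
    apply ContinuousLinearMap.ext
    intro v
    rfl
  have hL' : HasFDerivAt Φ (E : (ℝ × ℝ) →L[ℝ] (ℝ × ℝ)) p := by rw [hEL]; exact hL
  have hS : HasStrictFDerivAt Φ (E : (ℝ × ℝ) →L[ℝ] (ℝ × ℝ)) p :=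
    hΦd.hasStrictFDerivAt' hL' one_ne_zero
  set Ψ : ℝ × ℝ → ℝ × ℝ := hS.localInverse Φ E p with hΨdef
  have hΨp : Ψ (Φ p) = p := hS.localInverse_apply_image
  have hΨs : ContDiffAt ℝ 1 Ψ (Φ p) := hΦd.to_localInverse hL' one_ne_zero
  -- a neighborhood where everything works
  obtain ⟨V, hVnhds, hΨV⟩ := hΨs.contDiffOn le_rfl (by simp)
  have hW : ∀ᶠ y in 𝓝 (Φ p), Φ (Ψ y) = y ∧ Ψ y ∈ Ω ∧ DifferentiableAt ℝ Ψ y := by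
    have h1 : ∀ᶠ y in 𝓝 (Φ p), Φ (Ψ y) = y := hS.eventually_right_inverse
    have h2 : ∀ᶠ y in 𝓝 (Φ p), Ψ y ∈ Ω := by
      have : ContinuousAt Ψ (Φ p) := hS.localInverse_continuousAt
      exact this.preimage_mem_nhds (hΩo.mem_nhds (by rw [hΨp]; exact hpΩ))
    have h3 : ∀ᶠ y in 𝓝 (Φ p), DifferentiableAt ℝ Ψ y := by
      filter_upwards [interior_mem_nhds.mpr hVnhds] with y hy
      exact (hΨV.differentiableOn one_ne_zero).differentiableAt
        (mem_interior_iff_mem_nhds.mp hy)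
    filter_upwards [h1, h2, h3] with y hy1 hy2 hy3
    exact ⟨hy1, hy2, hy3⟩
  obtain ⟨ε, hε, hball⟩ := Metric.eventually_nhds_iff_ball.mp hW
  set δ := ε / 2 with hδ
  have hδpos : 0 < δ := by positivity
  -- the curve γ
  set e₁ : ℝ × ℝ := (1, 0) with he₁
  set γ : ℝ → ℝ × ℝ := fun t => Ψ (Φ p + t • e₁) with hγ
  have hmem : ∀ t ∈ Icc (0 : ℝ) δ, Φ p + t • e₁ ∈ Metric.ball (Φ p) ε := by
    intro t ht
    rw [Metric.mem_ball, dist_eq_norm]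
    have : Φ p + t • e₁ - Φ p = t • e₁ := by abel
    rw [this, norm_smul]
    have : ‖e₁‖ = 1 := by simp [he₁, Prod.norm_def]
    rw [this, mul_one]
    calc |t| = t := abs_of_nonneg ht.1
    _ ≤ δ := ht.2
    _ < ε := by rw [hδ]; linarith
  have hprop : ∀ t ∈ Icc (0 : ℝ) δ,
      Φ (γ t) = Φ p + t • e₁ ∧ γ t ∈ Ω ∧ DifferentiableAt ℝ Ψ (Φ p + t • e₁) :=
    fun t ht => hball _ (hmem t ht)
  -- derivative of u ∘ γ vanishes
  have hderiv : ∀ t ∈ Icc (0 : ℝ) δ, HasDerivAt (fun s => u (γ s)) 0 t := by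
    intro t ht
    obtain ⟨hΦγ, hγΩ, hΨdiff⟩ := hprop t ht
    set y := Φ p + t • e₁ with hy
    -- γ has derivative w at t
    set w : ℝ × ℝ := fderiv ℝ Ψ y e₁ with hw
    have hline : HasDerivAt (fun s : ℝ => Φ p + s • e₁) e₁ t := by
      simpa using ((hasDerivAt_id t).smul_const e₁).const_add (Φ p)
    have hγd : HasDerivAt γ w t :=
      (hΨdiff.hasFDerivAt).comp_hasDerivAt t hline
    -- Φ ∘ Ψ = id near y, so DΦ(γ t) w = e₁
    have hΦγd : HasFDerivAt Φ ((fderiv ℝ α (γ t)).prod (fderiv ℝ β (γ t))) (γ t) :=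
      HasFDerivAt.prodMk ((hdiffα _ hγΩ).hasFDerivAt) ((hdiffβ _ hγΩ).hasFDerivAt)
    have hcomp : HasFDerivAt (fun z => Φ (Ψ z))
        (((fderiv ℝ α (γ t)).prod (fderiv ℝ β (γ t))).comp (fderiv ℝ Ψ y)) y := by
      exact hΦγd.comp y hΨdiff.hasFDerivAt
    have hidev : (fun z => Φ (Ψ z)) =ᶠ[𝓝 y] id := by
      have hyball : Metric.ball (Φ p) ε ∈ 𝓝 y :=
        (Metric.isOpen_ball).mem_nhds (hmem t ht)
      filter_upwards [hyball] with z hz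
      exact (hball z hz).1
    have hid : HasFDerivAt (id : ℝ × ℝ → ℝ × ℝ)
        (((fderiv ℝ α (γ t)).prod (fderiv ℝ β (γ t))).comp (fderiv ℝ Ψ y)) y :=
      hcomp.congr_of_eventuallyEq hidev.symm
    have huniq : (((fderiv ℝ α (γ t)).prod (fderiv ℝ β (γ t))).comp (fderiv ℝ Ψ y))
        = ContinuousLinearMap.id ℝ (ℝ × ℝ) := hid.unique (hasFDerivAt_id y)
    have happ : fderiv ℝ β (γ t) w = 0 := by
      have := congrArg (fun (T : (ℝ × ℝ) →L[ℝ] (ℝ × ℝ)) => (T e₁).2) huniq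
      simpa [he₁] using this
    -- now compute derivative of u ∘ γ
    have hud : HasDerivAt (fun s => u (γ s)) (fderiv ℝ u (γ t) w) t :=
      ((hdiffu _ hγΩ).hasFDerivAt).comp_hasDerivAt t hγd
    have hzero : fderiv ℝ u (γ t) w = 0 := by
      rw [clm_decomp]
      rw [clm_decomp] at happ
      exact alg_ker happ (heq _ hγΩ) (hαne _ hγΩ)
    rwa [hzero] at hud
  -- u ∘ γ is constant on [0, δ]
  have hconst : ∀ t ∈ Icc (0 : ℝ) δ, u (γ t) = u (γ 0) := by
    apply constant_of_has_deriv_right_zero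
    · intro t ht
      exact ((hderiv t ht).continuousAt).continuousWithinAt
    · intro t ht
      exact ((hderiv t (Ico_subset_Icc_self ht)).hasDerivWithinAt)
  have hγ0 : γ 0 = p := by simp [hγ, hΨp]
  -- the contradiction
  have hδmem : δ ∈ Icc (0 : ℝ) δ := ⟨le_of_lt hδpos, le_refl δ⟩
  obtain ⟨hΦγδ, hγδΩ, -⟩ := hprop δ hδmem
  have huγδ : u (γ δ) = M := by
    rw [hconst δ hδmem, hγ0]
    exact hpK.2
  have hγδK : γ δ ∈ K := ⟨subset_closure hγδΩ, huγδ⟩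
  have hαγδ : α (γ δ) = α p + δ := by
    have := congrArg Prod.fst hΦγδ
    simpa [hΦ, he₁] using this
  have h2 : α (γ δ) ≤ α p := hpmax hγδK
  rw [hαγδ] at h2
  linarith



/-- Theorem 6: let `Ω ⊆ ℝ²` be non-empty, bounded and open and `β : Ω → ℝ` a `C¹`
function. Assume there is a `C¹` function `α : Ω → ℝ` such that
`α_x β_y - α_y β_x` vanishes at no point of `Ω`. Then every
`u ∈ C¹(Ω) ∩ C⁰(closure Ω)` satisfying `β_y u_x - β_x u_y = 0` in `Ω` has
`sup_Ω u = sup_∂Ω u` and `inf_Ω u = inf_∂Ω u`. -/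
theorem transport_equation_max_principle
    (Ω : Set (ℝ × ℝ)) (hΩne : Ω.Nonempty) (hΩo : IsOpen Ω)
    (hΩb : Bornology.IsBounded Ω)
    (β : ℝ × ℝ → ℝ) (hβ : ContDiffOn ℝ 1 β Ω)
    (hα : ∃ α : ℝ × ℝ → ℝ, ContDiffOn ℝ 1 α Ω ∧
      ∀ p ∈ Ω, fderiv ℝ α p (1, 0) * fderiv ℝ β p (0, 1)
          - fderiv ℝ α p (0, 1) * fderiv ℝ β p (1, 0) ≠ 0)
    (u : ℝ × ℝ → ℝ) (hu : ContDiffOn ℝ 1 u Ω) (huc : ContinuousOn u (closure Ω))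
    (heq : ∀ p ∈ Ω,
      fderiv ℝ β p (0, 1) * fderiv ℝ u p (1, 0)
        - fderiv ℝ β p (1, 0) * fderiv ℝ u p (0, 1) = 0) :
    sSup (u '' Ω) = sSup (u '' frontier Ω) ∧
    sInf (u '' Ω) = sInf (u '' frontier Ω) := by
  have hcc : IsCompact (closure Ω) :=
    Metric.isCompact_of_isClosed_isBounded isClosed_closure hΩb.closure
  have hBdd : BddAbove (u '' closure Ω) := (hcc.image_of_continuousOn huc).bddAbove
  have hBddb : BddBelow (u '' closure Ω) := (hcc.image_of_continuousOn huc).bddBelow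
  have hfs : frontier Ω ⊆ closure Ω := frontier_subset_closure
  have hsub : u '' Ω ⊆ u '' closure Ω := Set.image_mono subset_closure
  have hfsub : u '' frontier Ω ⊆ u '' closure Ω := Set.image_mono hfs
  -- max on frontier
  obtain ⟨xM, hxMf, hxMmax⟩ := exists_frontier_isMaxOn Ω hΩne hΩo hΩb β hβ hα u hu huc heq
  -- min on frontier (apply to -u)
  have hneq : ∀ p ∈ Ω,
      fderiv ℝ β p (0, 1) * fderiv ℝ (fun z => -u z) p (1, 0)
        - fderiv ℝ β p (1, 0) * fderiv ℝ (fun z => -u z) p (0, 1) = 0 := by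
    intro p hp
    rw [fderiv_fun_neg]
    simp only [ContinuousLinearMap.neg_apply]
    linarith [heq p hp]
  obtain ⟨xm, hxmf, hxmmax⟩ := exists_frontier_isMaxOn Ω hΩne hΩo hΩb β hβ hα
    (fun z => -u z) hu.neg huc.neg hneq
  have hxmmin : ∀ y ∈ closure Ω, u xm ≤ u y := by
    intro y hy
    have := hxmmax y hy
    simpa using this
  -- values on the closure are approximated from Ω
  have hle : ∀ x ∈ closure Ω, u x ≤ sSup (u '' Ω) := by
    intro x hx
    have hnb : (𝓝[Ω] x).NeBot := mem_closure_iff_nhdsWithin_neBot.mp hx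
    have htend : Filter.Tendsto u (𝓝[Ω] x) (𝓝 (u x)) :=
      (huc x hx).mono subset_closure
    exact le_of_tendsto htend
      (Filter.eventually_iff_exists_mem.mpr ⟨Ω, self_mem_nhdsWithin,
        fun z hz => le_csSup (hBdd.mono hsub) (Set.mem_image_of_mem u hz)⟩)
  have hge : ∀ x ∈ closure Ω, sInf (u '' Ω) ≤ u x := by
    intro x hx
    have hnb : (𝓝[Ω] x).NeBot := mem_closure_iff_nhdsWithin_neBot.mp hx
    have htend : Filter.Tendsto u (𝓝[Ω] x) (𝓝 (u x)) :=
      (huc x hx).mono subset_closure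
    exact ge_of_tendsto htend
      (Filter.eventually_iff_exists_mem.mpr ⟨Ω, self_mem_nhdsWithin,
        fun z hz => csInf_le (hBddb.mono hsub) (Set.mem_image_of_mem u hz)⟩)
  constructor
  · apply le_antisymm
    · apply csSup_le (hΩne.image u)
      rintro y ⟨z, hz, rfl⟩
      calc u z ≤ u xM := hxMmax z (subset_closure hz)
        _ ≤ sSup (u '' frontier Ω) :=
          le_csSup (hBdd.mono hfsub) (Set.mem_image_of_mem u hxMf)
    · apply csSup_le ⟨u xM, Set.mem_image_of_mem u hxMf⟩
      rintro y ⟨z, hz, rfl⟩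
      exact hle z (hfs hz)
  · apply le_antisymm
    · apply le_csInf ⟨u xm, Set.mem_image_of_mem u hxmf⟩
      rintro y ⟨z, hz, rfl⟩
      exact hge z (hfs hz)
    · apply le_csInf (hΩne.image u)
      rintro y ⟨z, hz, rfl⟩
      calc sInf (u '' frontier Ω)
          ≤ u xm := csInf_le (hBddb.mono hfsub) (Set.mem_image_of_mem u hxmf)
        _ ≤ u z := hxmmin z (subset_closure hz)
end
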